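/- arXiv:1411.6080 — 5 statements merged into one kernel-verified Lean document; each statement's English description precedes it below -/
import Mathlib

section
/- Let F be as in the CIR model (positive, strictly increasing, strictly convex solution of L u = ru with F(0)=1), and let c_s > 0, y_s = (μθ + r c_s)/(μ + r). Then v(y) = F(y)/F'(y) - (y - c_s) satisfies v(c_s) > 0 and v(y_s) > 0; consequently any root b* of F(b) = (b - c_s)F'(b) satisfies b* > max(c_s, y_s). -/
/-! At `y_s` the drift term of the ODE is `r (y_s - c_s) F'`, so the ODE reads
`r F = r (y_s - c_s) F' + σ² y_s F''/2 > r (y_s - c_s) F'`, i.e. `v y_s > 0`; at `c_s`, `v c_s = F/F' > 0`.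
A root `b` of `F b = (b - c_s) F' b` is a zero of `v`, and `v` is strictly decreasing, so `b` lies
to the right of every positive point where `v` is positive. -/

lemma sub_mul_deriv_lt_of_ode {F : ℝ → ℝ} {μ θ σ r c y : ℝ} (hσ : σ ≠ 0) (hr : 0 < r)
    (hy : 0 < y) (hF'' : 0 < deriv (deriv F) y)
    (hODE : σ ^ 2 * y / 2 * deriv (deriv F) y + μ * (θ - y) * deriv F y = r * F y)
    (hdrift : μ * (θ - y) = r * (y - c)) :
    (y - c) * deriv F y < F y := by
  have hdiffusion : 0 < σ ^ 2 * y / 2 * deriv (deriv F) y := by positivity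
  rw [hdrift] at hODE
  refine lt_of_mul_lt_mul_left ?_ hr.le
  linarith

theorem bstar_gt_max_general (μ θ σ r c_s : ℝ) (hμ : 0 < μ) (hθ : 0 < θ) (hσ : 0 < σ) (hr : 0 < r)
    (hcs : 0 < c_s)
    (F : ℝ → ℝ)
    (hFpos : ∀ y, 0 ≤ y → 0 < F y)
    (hF'pos : ∀ y, 0 < y → 0 < deriv F y)
    (hF''pos : ∀ y, 0 < y → 0 < deriv (deriv F) y)
    (hODE : ∀ y, 0 ≤ y → σ^2 * y / 2 * deriv (deriv F) y + μ * (θ - y) * deriv F y = r * F y)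
    (y_s : ℝ) (hys : y_s = (μ * θ + r * c_s) / (μ + r))
    (v : ℝ → ℝ) (hv : ∀ y, v y = F y / deriv F y - (y - c_s))
    (hvanti : StrictAntiOn v (Set.Ioi 0)) :
    0 < v c_s ∧ 0 < v y_s ∧
    ∀ b : ℝ, 0 < b → F b = (b - c_s) * deriv F b → max c_s y_s < b := by
  have hys_pos : 0 < y_s := by rw [hys]; positivity
  have hvcs : 0 < v c_s := by
    rw [hv, sub_self, sub_zero]
    exact div_pos (hFpos c_s hcs.le) (hF'pos c_s hcs)
  have hvys : 0 < v y_s := by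
    have hdrift : μ * (θ - y_s) = r * (y_s - c_s) := by rw [hys]; field_simp; ring
    rw [hv, sub_pos, lt_div_iff₀ (hF'pos y_s hys_pos)]
    exact sub_mul_deriv_lt_of_ode hσ.ne' hr hys_pos (hF''pos y_s hys_pos)
      (hODE y_s hys_pos.le) hdrift
  refine ⟨hvcs, hvys, fun b hb hroot => ?_⟩
  have hvb : v b = 0 := by
    rw [hv, hroot, mul_div_cancel_right₀ _ (hF'pos b hb).ne', sub_self]
  have lt_root : ∀ z, 0 < z → 0 < v z → z < b := fun z hz hvz =>
    (hvanti.lt_iff_gt (Set.mem_Ioi.2 hb) (Set.mem_Ioi.2 hz)).1 (hvb ▸ hvz)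
  exact max_lt (lt_root c_s hcs hvcs) (lt_root y_s hys_pos hvys)

theorem bstar_gt_max (μ θ σ r c_s : ℝ) (hμ : 0 < μ) (hθ : 0 < θ) (hσ : 0 < σ) (hr : 0 < r)
    (hcs : 0 < c_s)
    (F : ℝ → ℝ) (hC2 : ContDiff ℝ 2 F)
    (hFpos : ∀ y, 0 ≤ y → 0 < F y)
    (hF'pos : ∀ y, 0 < y → 0 < deriv F y)
    (hF''pos : ∀ y, 0 < y → 0 < deriv (deriv F) y)
    (hF0 : F 0 = 1)
    (hODE : ∀ y, 0 ≤ y → σ^2 * y / 2 * deriv (deriv F) y + μ * (θ - y) * deriv F y = r * F y)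
    (y_s : ℝ) (hys : y_s = (μ * θ + r * c_s) / (μ + r))
    (v : ℝ → ℝ) (hv : ∀ y, v y = F y / deriv F y - (y - c_s))
    (hvanti : StrictAntiOn v (Set.Ioi 0)) :
    0 < v c_s ∧ 0 < v y_s ∧
    ∀ b : ℝ, 0 < b → F b = (b - c_s) * deriv F b → max c_s y_s < b :=
  bstar_gt_max_general μ θ σ r c_s hμ hθ hσ hr hcs F hFpos hF'pos hF''pos hODE y_s hys v hv hvanti
end

section
/- Let F be positive, strictly increasing, strictly convex on [0,∞), b* > c_s with F(b*) = (b* - c_s)F'(b*), and define V(y) = ((b* - c_s)/F(b*))F(y) for y < b* and V(y) = y - c_s for y ≥ b*. Then V is convex on [0, ∞) and V(y) ≥ y - c_s for all y ≥ 0. -/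
theorem V_convex_and_majorant (c_s : ℝ) (hcs : 0 < c_s)
    (F : ℝ → ℝ)
    (hFpos : ∀ y, 0 ≤ y → 0 < F y)
    (hFmono : StrictMonoOn F (Set.Ici 0))
    (hFconv : StrictConvexOn ℝ (Set.Ici 0) F)
    (b : ℝ) (hb : c_s < b) (hroot : F b = (b - c_s) * deriv F b)
    (V : ℝ → ℝ)
    (hV : ∀ y, V y = if y < b then (b - c_s) / F b * F y else y - c_s) :
    ConvexOn ℝ (Set.Ici 0) V ∧ ∀ y : ℝ, 0 ≤ y → y - c_s ≤ V y := by
  have hb0 : (0:ℝ) < b := hcs.trans hb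
  have hbc : (0:ℝ) < b - c_s := by linarith
  have hFb : 0 < F b := hFpos b hb0.le
  set α : ℝ := (b - c_s) / F b with hα
  have hα0 : 0 < α := div_pos hbc hFb
  -- F is differentiable at b, else deriv F b = 0 and hroot gives F b = 0.
  have hdiff : DifferentiableAt ℝ F b := by
    by_contra h
    rw [deriv_zero_of_not_differentiableAt h, mul_zero] at hroot
    exact absurd hroot hFb.ne'
  have hconvF : ConvexOn ℝ (Set.Ici 0) F := hFconv.convexOn
  -- key inequality: for 0 ≤ y ≤ b, y - c_s ≤ α * F y
  have key : ∀ y, 0 ≤ y → y ≤ b → y - c_s ≤ α * F y := by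
    intro y hy0 hyb
    rcases eq_or_lt_of_le hyb with rfl | hyb'
    · rw [hα, div_mul_cancel₀ _ hFb.ne']
    · have hs := hconvF.slope_le_deriv (Set.mem_Ici.mpr hy0) (Set.mem_Ici.mpr hb0.le)
        hyb' hdiff
      rw [slope_def_field] at hs
      have hd : deriv F b = F b / (b - c_s) := by
        field_simp at hroot ⊢; linarith [hroot]
      rw [hd] at hs
      rw [div_le_div_iff₀ (by linarith) hbc] at hs
      rw [hα, div_mul_eq_mul_div, le_div_iff₀ hFb]
      nlinarith
  -- values of V
  have hVle : ∀ y, y ≤ b → V y = α * F y := by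
    intro y hy
    rcases eq_or_lt_of_le hy with rfl | hy'
    · rw [hV y, if_neg (lt_irrefl _), hα, div_mul_cancel₀ _ hFb.ne']
    · rw [hV y, if_pos hy']
  have hVge : ∀ y, b ≤ y → V y = y - c_s := by
    intro y hy
    rw [hV y, if_neg (not_lt.mpr hy)]
  have hαF : ConvexOn ℝ (Set.Ici 0) (fun y => α * F y) := by
    simpa [smul_eq_mul] using hconvF.smul hα0.le
  constructor
  · refine convexOn_of_slope_mono_adjacent (convex_Ici 0) ?_
    intro x y z hx hz hxy hyz
    have hx0 : (0:ℝ) ≤ x := hx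
    have hy0 : (0:ℝ) ≤ y := le_of_lt (lt_of_le_of_lt hx0 hxy)
    have hyx : (0:ℝ) < y - x := by linarith
    have hzy : (0:ℝ) < z - y := by linarith
    rcases le_or_gt z b with hzb | hbz
    · -- all in [0, b]
      have h1 : V x = α * F x := hVle x (by linarith)
      have h2 : V y = α * F y := hVle y (by linarith)
      have h3 : V z = α * F z := hVle z hzb
      rw [h1, h2, h3]
      exact hαF.slope_mono_adjacent hx hz hxy hyz
    · rcases le_or_gt b x with hbx | hxb
      · -- all in [b, ∞): both slopes are 1
        have h1 : V x = x - c_s := hVge x hbx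
        have h2 : V y = y - c_s := hVge y (by linarith)
        have h3 : V z = z - c_s := hVge z (by linarith)
        rw [h1, h2, h3]
        rw [div_le_div_iff₀ hyx hzy]; ring_nf; exact le_rfl
      · -- x < b < z
        rcases le_or_gt y b with hyb | hby
        · -- x < y ≤ b < z
          have h1 : V x = α * F x := hVle x (by linarith)
          have h2 : V y = α * F y := hVle y hyb
          have h3 : V z = z - c_s := hVge z hbz.le
          rw [h1, h2, h3]
          have hfb : α * F b = b - c_s := by
            rw [hα, div_mul_cancel₀ _ hFb.ne']
          rcases eq_or_lt_of_le hyb with rfl | hyb'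
          · -- y = b
            rw [hfb]
            have hfx := key x hx0 (by linarith)
            rw [div_le_div_iff₀ hyx hzy]
            nlinarith
          · have hby' : (0:ℝ) < b - y := by linarith
            have hfyb : b - c_s - α * F y ≤ b - y := by
              have := key y hy0 hyb
              linarith
            have step2 : (α * F b - α * F y) / (b - y) ≤ (z - c_s - α * F y) / (z - y) := by
              rw [hfb, div_le_div_iff₀ hby' hzy]
              nlinarith
            have step1 : (α * F y - α * F x) / (y - x) ≤ (α * F b - α * F y) / (b - y) :=
              hαF.slope_mono_adjacent hx (Set.mem_Ici.mpr hb0.le) hxy hyb'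
            linarith
        · -- x < b < y < z
          have h1 : V x = α * F x := hVle x (by linarith)
          have h2 : V y = y - c_s := hVge y hby.le
          have h3 : V z = z - c_s := hVge z hbz.le
          rw [h1, h2, h3]
          have hfx := key x hx0 (by linarith)
          rw [div_le_div_iff₀ hyx hzy]
          nlinarith
  · intro y hy0
    rcases lt_or_ge y b with hyb | hby
    · rw [hVle y hyb.le]; exact key y hy0 hyb.le
    · rw [hVge y hby]
end

section
/- Under the assumption V(0) = (b* - c_s)/F(b*) > c_b, the function ĥ(y) = V(y) - y - c_b satisfies: there exists a unique d̄ ∈ (0, b*) with ĥ(d̄) = 0, ĥ > 0 on [0, d̄), and ĥ < 0 on (d̄, ∞). -/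
/-! Below `b*`, `ĥ y = K F(y) - y - c_b` with `K = V(0) > 0`, which is convex because `F` is; it is
positive at `0` and equals `-(c_s + c_b) < 0` from `b*` on. A convex function that is positive at
one end of an interval and negative at the other crosses zero exactly once. -/

open Set

theorem ConvexOn.exists_sign_change {g : ℝ → ℝ} {a b : ℝ} (hab : a ≤ b)
    (hg : ConvexOn ℝ (Icc a b) g) (hcont : ContinuousOn g (Icc a b))
    (ha : 0 < g a) (hb : g b < 0) :
    ∃ d ∈ Ioo a b, g d = 0 ∧ (∀ y ∈ Ico a d, 0 < g y) ∧ ∀ y ∈ Ioc d b, g y < 0 := by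
  obtain ⟨d, hd, hgd⟩ := intermediate_value_Ioo' hab hcont ⟨hb, ha⟩
  have hbI : b ∈ Icc a b := right_mem_Icc.2 hab
  refine ⟨d, hd, hgd, fun y hy => ?_, fun y hy => ?_⟩
  · have hyI : y ∈ Icc a b := ⟨hy.1, hy.2.le.trans hd.2.le⟩
    exact hgd ▸ hg.lt_left_of_right_lt hyI hbI (Ioo_subset_openSegment ⟨hy.2, hd.2⟩) (hgd ▸ hb)
  · by_contra! hy0
    have := hg.le_right_of_left_le'' (Ioo_subset_Icc_self hd) hbI hy.1 hy.2 (hgd.trans_le hy0)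
    linarith

theorem hhat_unique_root_general (c_s c_b : ℝ) (hcs : 0 < c_s) (hcb : 0 < c_b)
    (F : ℝ → ℝ) (hdiff : Differentiable ℝ F)
    (hFpos : ∀ y, 0 ≤ y → 0 < F y)
    (hFconv : StrictConvexOn ℝ (Set.Ici 0) F)
    (hF0 : F 0 = 1)
    (b : ℝ) (hb : c_s < b)
    (V : ℝ → ℝ)
    (hV : ∀ y, V y = if y < b then (b - c_s) / F b * F y else y - c_s)
    (hnontriv : c_b < (b - c_s) / F b)
    (hhat : ℝ → ℝ) (hh : ∀ y, hhat y = V y - (y + c_b)) :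
    ∃ d : ℝ, d ∈ Set.Ioo 0 b ∧ hhat d = 0 ∧
      (∀ y, 0 ≤ y → y < d → 0 < hhat y) ∧
      (∀ y, d < y → hhat y < 0) ∧
      (∀ d' : ℝ, 0 ≤ d' → hhat d' = 0 → d' = d) := by
  set K := (b - c_s) / F b
  have hb0 : 0 < b := hcs.trans hb
  have hFb : 0 < F b := hFpos b hb0.le
  set g : ℝ → ℝ := fun y => K * F y - (y + c_b)
  have hhat_lt : ∀ y < b, hhat y = g y := fun y hy => by rw [hh, hV, if_pos hy]
  have hhat_ge : ∀ y, b ≤ y → hhat y = -(c_s + c_b) := fun y hy => by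
    rw [hh, hV, if_neg (not_lt.2 hy)]; ring
  have hgb : g b = -(c_s + c_b) := by simp only [g, K, div_mul_cancel₀ _ hFb.ne']; ring
  have hconv : ConvexOn ℝ (Icc 0 b) g :=
    ((hFconv.convexOn.subset Icc_subset_Ici_self (convex_Icc 0 b)).smul
      (div_pos (sub_pos.2 hb) hFb).le).sub ((concaveOn_id (convex_Icc 0 b)).add_const c_b)
  obtain ⟨d, hd, hgd, hpos, hneg⟩ := hconv.exists_sign_change hb0.le
    (by have := hdiff.continuous; fun_prop) (by simp only [g, hF0]; linarith) (by linarith)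
  have hhat_pos : ∀ y, 0 ≤ y → y < d → 0 < hhat y := fun y hy0 hyd =>
    hhat_lt y (hyd.trans hd.2) ▸ hpos y ⟨hy0, hyd⟩
  have hhat_neg : ∀ y, d < y → hhat y < 0 := fun y hdy => by
    rcases lt_or_ge y b with hyb | hby
    · exact hhat_lt y hyb ▸ hneg y ⟨hdy, hyb.le⟩
    · rw [hhat_ge y hby]; linarith
  refine ⟨d, hd, (hhat_lt d hd.2).trans hgd, hhat_pos, hhat_neg, fun d' hd' hzero => ?_⟩
  exact le_antisymm (not_lt.1 fun h => (hhat_neg d' h).ne hzero)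
    (not_lt.1 fun h => (hhat_pos d' hd' h).ne' hzero)

theorem hhat_unique_root (c_s c_b : ℝ) (hcs : 0 < c_s) (hcb : 0 < c_b)
    (F : ℝ → ℝ) (hdiff : Differentiable ℝ F)
    (hFpos : ∀ y, 0 ≤ y → 0 < F y)
    (hFmono : StrictMonoOn F (Set.Ici 0))
    (hFconv : StrictConvexOn ℝ (Set.Ici 0) F)
    (hF0 : F 0 = 1)
    (b : ℝ) (hb : c_s < b) (hroot : F b = (b - c_s) * deriv F b)
    (V : ℝ → ℝ)
    (hV : ∀ y, V y = if y < b then (b - c_s) / F b * F y else y - c_s)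
    (hnontriv : c_b < (b - c_s) / F b)
    (hhat : ℝ → ℝ) (hh : ∀ y, hhat y = V y - (y + c_b)) :
    ∃ d : ℝ, d ∈ Set.Ioo 0 b ∧ hhat d = 0 ∧
      (∀ y, 0 ≤ y → y < d → 0 < hhat y) ∧
      (∀ y, d < y → hhat y < 0) ∧
      (∀ d' : ℝ, 0 ≤ d' → hhat d' = 0 → d' = d) :=
  hhat_unique_root_general c_s c_b hcs hcb F hdiff hFpos hFconv hF0 b hb V hV hnontriv hhat hh
end

section
/- Let μ, θ, r > 0, c_b, c_s > 0, and suppose V(0) = (b* - c_s)/F(b*) > c_b where F(0) = 1, F'(0) = r/(μθ), F is convex with F(b*) = (b* - c_s)F'(b*) and b* > c_s. Then μθ > r c_b, i.e., y_b = (μθ - r c_b)/(μ + r) > 0. -/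
theorem nontriviality_implies_yb_pos (μ θ r c_b c_s : ℝ)
    (hμ : 0 < μ) (hθ : 0 < θ) (hr : 0 < r) (hcb : 0 < c_b) (hcs : 0 < c_s)
    (F : ℝ → ℝ) (hdiff : Differentiable ℝ F)
    (hFpos : ∀ y, 0 ≤ y → 0 < F y)
    (hFconv : StrictConvexOn ℝ (Set.Ici 0) F)
    (hF0 : F 0 = 1) (hF'0 : deriv F 0 = r / (μ * θ))
    (b : ℝ) (hb : c_s < b) (hroot : F b = (b - c_s) * deriv F b)
    (hnontriv : c_b < (b - c_s) / F b) :
    r * c_b < μ * θ ∧ 0 < (μ * θ - r * c_b) / (μ + r) := by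
  have hb0 : 0 < b := hcs.trans hb
  have hFb : 0 < F b := hFpos b hb0.le
  have hbcs : 0 < b - c_s := by linarith
  have hmono := hFconv.strictMonoOn_deriv (fun x _ => hdiff x)
  have hd0 : 0 < deriv F 0 := by
    rw [hF'0]; positivity
  have hdb : deriv F 0 < deriv F b :=
    hmono (Set.self_mem_Ici) (Set.mem_Ici.mpr hb0.le) hb0
  have hdbpos : 0 < deriv F b := hd0.trans hdb
  -- (b - c_s)/F b = 1 / deriv F b
  have hkey : (b - c_s) / F b = 1 / deriv F b := by
    rw [hroot]; field_simp
  have h1 : c_b < 1 / deriv F b := hkey ▸ hnontriv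
  have h2 : 1 / deriv F b < 1 / deriv F 0 := by
    apply one_div_lt_one_div_of_lt hd0 hdb
  have h3 : 1 / deriv F 0 = μ * θ / r := by
    rw [hF'0, one_div_div]
  have h4 : c_b < μ * θ / r := by linarith
  have hmain : r * c_b < μ * θ := by
    rw [lt_div_iff₀ hr] at h4; linarith
  refine ⟨hmain, div_pos (by linarith) (by linarith)⟩
end

section
/- Suppose W: (φ(0), 0] → ℝ is concave and nonincreasing, and for every z there exists an affine function L_z(α) = m_z α + c_z with L_z ≥ W on [φ(0), 0] and L_z(z) = W(z). Let F, G be the fundamental solutions of the CIR ODE and suppose E_y[e^{-rτ}F(Y_τ)] = F(y) and E_y[e^{-rτ}G(Y_τ)] = G(y) for a bounded stopping time τ (martingale property). Then E_y[e^{-rτ}F(Y_τ)W(φ(Y_τ))] ≤ F(y)W(φ(y)), where φ = -G/F. -/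
open MeasureTheory

/-- Supermartingale inequality for the concave majorant: abstracting the stochastic
content, `D ω` plays the role of the discount factor `e^{-rτ(ω)}` and `Z ω` of the
stopped process `Y_τ(ω)`; the two martingale identities for `e^{-rt}F(Y_t)` and
`e^{-rt}G(Y_t)` are given as hypotheses. -/
theorem supermartingale_inequality
    {Ω : Type*} [MeasurableSpace Ω] (P : Measure Ω) [IsProbabilityMeasure P]
    (F G : ℝ → ℝ) (φ : ℝ → ℝ) (hφ : ∀ x, φ x = -(G x) / F x)
    (W : ℝ → ℝ)
    (y : ℝ) (hy : φ 0 ≤ φ y ∧ φ y ≤ 0)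
    (hFpos : ∀ x, 0 < F x)
    -- W is concave and nonincreasing on [φ(0), 0]
    (hWconc : ConcaveOn ℝ (Set.Icc (φ 0) 0) W)
    (hWanti : AntitoneOn W (Set.Icc (φ 0) 0))
    -- tangent (supporting) lines for W
    (htangent : ∀ z ∈ Set.Icc (φ 0) 0, ∃ m c : ℝ,
      (∀ α ∈ Set.Icc (φ 0) 0, W α ≤ m * α + c) ∧ m * z + c = W z)
    (D Z : Ω → ℝ) (hD : ∀ ω, 0 ≤ D ω)
    (hZ : ∀ ω, φ 0 ≤ φ (Z ω) ∧ φ (Z ω) ≤ 0)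
    -- integrability
    (hintF : Integrable (fun ω => D ω * F (Z ω)) P)
    (hintG : Integrable (fun ω => D ω * G (Z ω)) P)
    (hintW : Integrable (fun ω => D ω * F (Z ω) * W (φ (Z ω))) P)
    -- martingale identities
    (hmartF : ∫ ω, D ω * F (Z ω) ∂P = F y)
    (hmartG : ∫ ω, D ω * G (Z ω) ∂P = G y) :
    ∫ ω, D ω * F (Z ω) * W (φ (Z ω)) ∂P ≤ F y * W (φ y) := by
  obtain ⟨m, c, hL, hLz⟩ := htangent (φ y) ⟨hy.1, hy.2⟩
  have hFφ : ∀ x, F x * φ x = -(G x) := by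
    intro x
    rw [hφ x, mul_comm, div_mul_cancel₀ _ (hFpos x).ne']
  have key : ∀ ω, D ω * F (Z ω) * W (φ (Z ω)) ≤ (-m) * (D ω * G (Z ω)) + c * (D ω * F (Z ω)) := by
    intro ω
    have h1 : W (φ (Z ω)) ≤ m * φ (Z ω) + c := hL _ ⟨(hZ ω).1, (hZ ω).2⟩
    have h2 : 0 ≤ D ω * F (Z ω) := mul_nonneg (hD ω) (hFpos _).le
    calc D ω * F (Z ω) * W (φ (Z ω)) ≤ D ω * F (Z ω) * (m * φ (Z ω) + c) :=
          mul_le_mul_of_nonneg_left h1 h2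
      _ = m * (D ω * (F (Z ω) * φ (Z ω))) + c * (D ω * F (Z ω)) := by ring
      _ = (-m) * (D ω * G (Z ω)) + c * (D ω * F (Z ω)) := by rw [hFφ]; ring
  have hint2 : Integrable (fun ω => (-m) * (D ω * G (Z ω)) + c * (D ω * F (Z ω))) P :=
    (hintG.const_mul _).add (hintF.const_mul _)
  calc ∫ ω, D ω * F (Z ω) * W (φ (Z ω)) ∂P
      ≤ ∫ ω, (-m) * (D ω * G (Z ω)) + c * (D ω * F (Z ω)) ∂P :=
        integral_mono hintW hint2 key
    _ = (-m) * G y + c * F y := by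
        rw [integral_add (hintG.const_mul _) (hintF.const_mul _),
          integral_const_mul, integral_const_mul, hmartF, hmartG]
    _ = F y * W (φ y) := by
        rw [← hLz]
        have := hFφ y
        linear_combination (-m) * this
end
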